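/- arXiv:2305.16425 — 11 statements merged into one kernel-verified Lean document; each statement's English description precedes it below -/
import Mathlib

section
/- Let F be a field of characteristic p > 0 and let L be a finite-dimensional Lie algebra over F in which every derivation is inner (equivalently, the first Chevalley–Eilenberg cohomology H¹_CE(L,L) vanishes). Then there exists a map ω : L → L such that for every x ∈ L, the adjoint map of ω(x) equals the p-th iterate of the adjoint map of x, i.e. ⁅ω(x), y⁆ = (ad x)^p (y) for all y ∈ L. (This is the key step showing that L admits a restricted structure.) -/
/-- If every derivation of a finite-dimensional Lie algebra `L` over a field of
characteristic `p > 0` is inner, then there is a map `ω : L → L` with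
`ad (ω x) = (ad x) ^ p` for every `x`, i.e. `L` admits a restricted structure. -/
theorem statement0 (F : Type*) [Field F] (p : ℕ) [CharP F p] (hp : 0 < p)
    (L : Type*) [LieRing L] [LieAlgebra F L] [FiniteDimensional F L]
    (hinner : ∀ D : LieDerivation F L L, ∃ x : L, ∀ y : L, D y = ⁅x, y⁆) :
    ∃ ω : L → L, ∀ x y : L, ⁅ω x, y⁆ = ((LieAlgebra.ad F L x) ^ p) y := by
  have hprime : p.Prime := by
    rcases CharP.char_is_prime_or_zero F p with h | h
    · exact h
    · omega
  -- `(ad x)^p` is a derivation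
  have key : ∀ x : L, ∃ D : LieDerivation F L L,
      (D : L → L) = ((LieAlgebra.ad F L x) ^ p : Module.End F L) := by
    intro x
    set A : Module.End F L := LieAlgebra.ad F L x with hA
    have hiter : ∀ (n : ℕ) (z : L), (LieDerivation.ad F L x)^[n] z = (A ^ n) z := by
      intro n
      induction n with
      | zero => intro z; simp
      | succ n ih =>
        intro z
        rw [Function.iterate_succ_apply, pow_succ, Module.End.mul_apply, ← ih]
        congr 1
        simp [hA]
    refine ⟨⟨A ^ p, ?_⟩, rfl⟩
    intro a b
    have h := LieDerivation.iterate_apply_lie' (LieDerivation.ad F L x) p a b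
    have hmem : ({0, p} : Finset ℕ) ⊆ Finset.range (p + 1) := by
      intro i hi
      simp only [Finset.mem_insert, Finset.mem_singleton] at hi
      rcases hi with rfl | rfl <;> simp
    have hsum : ∑ i ∈ Finset.range (p + 1), p.choose i • ⁅(LieDerivation.ad F L x)^[i] a,
        (LieDerivation.ad F L x)^[p - i] b⁆ =
        ∑ i ∈ ({0, p} : Finset ℕ), p.choose i • ⁅(LieDerivation.ad F L x)^[i] a,
        (LieDerivation.ad F L x)^[p - i] b⁆ := by
      refine (Finset.sum_subset hmem ?_).symm
      intro i hi hni
      simp only [Finset.mem_insert, Finset.mem_singleton, not_or] at hni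
      have hir : i < p + 1 := Finset.mem_range.mp hi
      have hdvd : p ∣ p.choose i := hprime.dvd_choose_self hni.1 (by omega)
      have : ((p.choose i : F)) = 0 := by
        exact (CharP.cast_eq_zero_iff F p _).2 hdvd
      rw [← Nat.cast_smul_eq_nsmul F, this, zero_smul]
    have hne : (0 : ℕ) ≠ p := by omega
    rw [hsum, Finset.sum_pair hne] at h
    simp only [hiter] at h
    simp only [Nat.choose_zero_right, Nat.choose_self, one_smul, Nat.sub_zero, Nat.sub_self,
      pow_zero, Module.End.one_apply] at h
    rw [h, ← lie_skew b ((A ^ p) a)]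
    abel
  choose D hD using key
  choose ω hω using fun x => hinner (D x)
  refine ⟨ω, fun x y => ?_⟩
  rw [← hω x y, hD x]
end

section
/- Let F be a field of characteristic p ≥ 3 and let h be the Heisenberg algebra over F with basis (e₁, e₂, e₃). A map ω : h → h satisfies (i) ω(λu) = λ^p·ω(u) for all λ ∈ F, u ∈ h, (ii) ω(u + v) = ω(u) + ω(v) for all u, v ∈ h, and (iii) ⁅u, ω(v)⁆ equals the (p−1)-fold right-bracket iterate (w ↦ ⁅w, v⁆)^[p−1](u) for all u, v ∈ h, if and only if there exist a, b, c ∈ F such that ω(α·e₁ + β·e₂ + γ·e₃) = (α^p·a + β^p·b + γ^p·c)·e₃ for all α, β, γ ∈ F. (Conditions (i)–(iii) are precisely the axioms of a p-map на h: since h is nilpotent of class 2 and p ≥ 3, the correction terms Σ sᵢ(x,y) in the general additivity axiom of a p-map vanish.) -/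
/-!
The Heisenberg algebra is two-step nilpotent, so for `p ≥ 3` every `(p-1)`-fold iterated
bracket vanishes and axiom (iii) just says that `ω` takes values in the centre `F • e₃`.
A map that is additive and `p`-semilinear is determined by its values on the basis, which
gives the constants `a, b, c`; conversely `(α, β, γ) ↦ α^p a + β^p b + γ^p c` is additive
because the Frobenius is.
-/

open Module

theorem iterate_lie_right_eq_zero {L : Type*} [LieRing L] (hL : ∀ x y z : L, ⁅⁅x, y⁆, z⁆ = 0)
    (u v : L) {n : ℕ} (hn : 2 ≤ n) : (fun w => ⁅w, v⁆)^[n] u = 0 := by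
  obtain ⟨k, rfl⟩ : ∃ k, n = k + 2 := ⟨n - 2, by omega⟩
  rw [Function.iterate_add_apply, show (fun w => ⁅w, v⁆)^[2] u = 0 from hL u v v,
    Function.iterate_fixed (zero_lie v)]

theorem Module.Basis.sum_repr_fin_three {R M : Type*} [Semiring R] [AddCommMonoid M]
    [Module R M] (E : Basis (Fin 3) R M) (u : M) :
    E.repr u 0 • E 0 + E.repr u 1 • E 1 + E.repr u 2 • E 2 = u := by
  simpa only [Fin.sum_univ_three] using E.sum_repr u

section Heisenberg

variable {R L : Type*} [CommRing R] [LieRing L] [LieAlgebra R L] {E : Basis (Fin 3) R L}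

structure IsHeisenbergBasis (E : Basis (Fin 3) R L) : Prop where
  lie_zero_one : ⁅E 0, E 1⁆ = E 2
  lie_zero_two : ⁅E 0, E 2⁆ = 0
  lie_one_two : ⁅E 1, E 2⁆ = 0

namespace IsHeisenbergBasis

theorem lie_eq (hE : IsHeisenbergBasis E) (u v : L) :
    ⁅u, v⁆ = (E.repr u 0 * E.repr v 1 - E.repr u 1 * E.repr v 0) • E 2 := by
  conv_lhs => rw [← E.sum_repr_fin_three u, ← E.sum_repr_fin_three v]
  simp only [add_lie, lie_add, smul_lie, lie_smul, lie_self, ← lie_skew (E 1) (E 0),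
    ← lie_skew (E 2) (E 0), ← lie_skew (E 2) (E 1), hE.lie_zero_one, hE.lie_zero_two,
    hE.lie_one_two]
  module

theorem lie_basis_two (hE : IsHeisenbergBasis E) (u : L) : ⁅u, E 2⁆ = 0 := by
  simp [hE.lie_eq]

theorem lie_lie (hE : IsHeisenbergBasis E) (u v w : L) : ⁅⁅u, v⁆, w⁆ = 0 := by
  rw [hE.lie_eq u v, smul_lie, ← lie_skew, hE.lie_basis_two, neg_zero, smul_zero]

theorem eq_smul_of_forall_lie_eq_zero (hE : IsHeisenbergBasis E) {x : L}
    (hx : ∀ u : L, ⁅u, x⁆ = 0) : x = E.repr x 2 • E 2 := by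
  have h1 : E.repr x 1 = 0 := by
    simpa using congrArg (E.repr · 2) ((hE.lie_eq (E 0) x).symm.trans (hx (E 0)))
  have h0 : E.repr x 0 = 0 := by
    simpa using congrArg (E.repr · 2) ((hE.lie_eq (E 1) x).symm.trans (hx (E 1)))
  conv_lhs => rw [← E.sum_repr_fin_three x, h0, h1]
  simp

end IsHeisenbergBasis

end Heisenberg

/-- Over a field of characteristic `p ≥ 3`, the `p`-maps on the Heisenberg algebra
(with basis `E 0, E 1, E 2`, `⁅E 0, E 1⁆ = E 2` central) are exactly the maps
`α•E0 + β•E1 + γ•E2 ↦ (α^p a + β^p b + γ^p c) • E2` for scalars `a, b, c`. -/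
theorem statement2 (F : Type*) [Field F] (p : ℕ) [CharP F p] (hp : 3 ≤ p)
    (h : Type*) [LieRing h] [LieAlgebra F h]
    (E : Module.Basis (Fin 3) F h)
    (hE01 : ⁅E 0, E 1⁆ = E 2) (hE02 : ⁅E 0, E 2⁆ = 0) (hE12 : ⁅E 1, E 2⁆ = 0)
    (ω : h → h) :
    ((∀ (l : F) (u : h), ω (l • u) = l ^ p • ω u) ∧
     (∀ u v : h, ω (u + v) = ω u + ω v) ∧
     (∀ u v : h, ⁅u, ω v⁆ = (fun w => ⁅w, v⁆)^[p - 1] u)) ↔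
    ∃ a b c : F, ∀ α β γ : F,
      ω (α • E 0 + β • E 1 + γ • E 2) = (α ^ p * a + β ^ p * b + γ ^ p * c) • E 2 := by
  have hE : IsHeisenbergBasis E := ⟨hE01, hE02, hE12⟩
  have : NeZero p := ⟨by omega⟩
  have := CharP.char_is_prime_of_pos F p
  simp only [iterate_lie_right_eq_zero hE.lie_lie _ _ (show 2 ≤ p - 1 by omega)]
  constructor
  · rintro ⟨hsmul, hadd, hcentral⟩
    refine ⟨E.repr (ω (E 0)) 2, E.repr (ω (E 1)) 2, E.repr (ω (E 2)) 2, fun α β γ => ?_⟩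
    have hcentre i := hE.eq_smul_of_forall_lie_eq_zero (hcentral · (E i))
    conv_lhs => rw [hadd, hadd, hsmul, hsmul, hsmul, hcentre 0, hcentre 1, hcentre 2]
    module
  · rintro ⟨a, b, c, hω⟩
    obtain rfl : ω = fun u =>
        (E.repr u 0 ^ p * a + E.repr u 1 ^ p * b + E.repr u 2 ^ p * c) • E 2 :=
      funext fun u => by rw [← hω, E.sum_repr_fin_three]
    refine ⟨fun l u => ?_, fun u v => ?_, fun u v => ?_⟩
    · simp only [map_smul, Finsupp.smul_apply, smul_eq_mul, mul_pow, smul_smul]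
      module
    · simp only [map_add, Finsupp.add_apply, add_pow_char]
      module
    · rw [lie_smul, hE.lie_basis_two, smul_zero]
end

section
/- Let F be a field of characteristic p ≥ 3 and let h be the Heisenberg algebra over F with basis (e₁, e₂, e₃). Define p-maps ω_{x*} and ω_{y*} on h by ω_{x*}(α·e₁ + β·e₂ + γ·e₃) = α^p·e₃ and ω_{y*}(α·e₁ + β·e₂ + γ·e₃) = β^p·e₃. Then the restricted Lie algebras (h, ω_{x*}) and (h, ω_{y*}) are restricted-isomorphic: there exists a Lie algebra automorphism φ of h such that φ(ω_{x*}(u)) = ω_{y*}(φ(u)) for all u ∈ h. -/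
/-!
The rotation `e₁ ↦ e₂ ↦ -e₁`, `e₃ ↦ e₃` of the Heisenberg algebra preserves the bracket, since
it has determinant one on `span {e₁, e₂}` and fixes the centre `F e₃ = ⁅h, h⁆`. It sends a vector
with first coordinate `α` to one with second coordinate `α`, so it intertwines `ω_{x*}` and
`ω_{y*}`.
-/

open Module

theorem LinearMap.map_lie_of_basis {R L L' ι : Type*} [CommRing R] [LieRing L] [LieAlgebra R L]
    [LieRing L'] [LieAlgebra R L'] (b : Basis ι R L) (f : L →ₗ[R] L')
    (hf : ∀ i j, f ⁅b i, b j⁆ = ⁅f (b i), f (b j)⁆) (x y : L) :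
    f ⁅x, y⁆ = ⁅f x, f y⁆ := by
  have hbilin := LinearMap.ext_basis b b
    (B := (LieModule.toEnd R L L : L →ₗ[R] L →ₗ[R] L).compr₂ f)
    (B' := (LieModule.toEnd R L' L' : L' →ₗ[R] L' →ₗ[R] L').compl₁₂ f f) (by simpa using hf)
  simpa using LinearMap.congr_fun₂ hbilin x y

noncomputable section

namespace Module.Basis

section Module

variable {R M : Type*} [CommRing R] [AddCommGroup M] [Module R M] (E : Basis (Fin 3) R M)

def quarterTurn : M ≃ₗ[R] M :=
  .ofLinearMap (E.constr R ![E 1, -E 0, E 2]) (E.constr R ![-E 1, E 0, E 2])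
    (E.ext fun i => by fin_cases i <;> simp [Finsupp.single_apply])
    (E.ext fun i => by fin_cases i <;> simp [Finsupp.single_apply])

@[simp] lemma quarterTurn_apply_zero : E.quarterTurn (E 0) = E 1 := by simp [quarterTurn]

@[simp] lemma quarterTurn_apply_one : E.quarterTurn (E 1) = -E 0 := by simp [quarterTurn]

@[simp] lemma quarterTurn_apply_two : E.quarterTurn (E 2) = E 2 := by simp [quarterTurn]

lemma quarterTurn_apply (α β γ : R) :
    E.quarterTurn (α • E 0 + β • E 1 + γ • E 2) = (-β) • E 0 + α • E 1 + γ • E 2 := by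
  simp only [map_add, map_smul, quarterTurn_apply_zero, quarterTurn_apply_one,
    quarterTurn_apply_two, smul_neg, neg_smul]
  abel

lemma exists_eq_fin_three (u : M) : ∃ α β γ : R, u = α • E 0 + β • E 1 + γ • E 2 :=
  ⟨E.repr u 0, E.repr u 1, E.repr u 2, by
    rw [← Fin.sum_univ_three (fun i => E.repr u i • E i), E.sum_repr]⟩

end Module

variable {R L : Type*} [CommRing R] [LieRing L] [LieAlgebra R L] (E : Basis (Fin 3) R L)

def quarterTurnLieEquiv (hE01 : ⁅E 0, E 1⁆ = E 2) (hE02 : ⁅E 0, E 2⁆ = 0)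
    (hE12 : ⁅E 1, E 2⁆ = 0) : L ≃ₗ⁅R⁆ L :=
  { E.quarterTurn with
    map_lie' := fun {x y} => E.quarterTurn.toLinearMap.map_lie_of_basis E (fun i j => by
      fin_cases i <;> fin_cases j <;>
        simp [hE01, hE02, hE12, ← lie_skew (E 1) (E 0), ← lie_skew (E 2) (E 0),
          ← lie_skew (E 2) (E 1)]) x y }

lemma coe_quarterTurnLieEquiv (hE01 : ⁅E 0, E 1⁆ = E 2) (hE02 : ⁅E 0, E 2⁆ = 0)
    (hE12 : ⁅E 1, E 2⁆ = 0) : ⇑(E.quarterTurnLieEquiv hE01 hE02 hE12) = E.quarterTurn :=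
  rfl

end Module.Basis

end

theorem statement4_general (F : Type*) [Field F] (p : ℕ)
    (h : Type*) [LieRing h] [LieAlgebra F h]
    (E : Module.Basis (Fin 3) F h)
    (hE01 : ⁅E 0, E 1⁆ = E 2) (hE02 : ⁅E 0, E 2⁆ = 0) (hE12 : ⁅E 1, E 2⁆ = 0)
    (ωx ωy : h → h)
    (hωx : ∀ α β γ : F, ωx (α • E 0 + β • E 1 + γ • E 2) = α ^ p • E 2)
    (hωy : ∀ α β γ : F, ωy (α • E 0 + β • E 1 + γ • E 2) = β ^ p • E 2) :
    ∃ φ : h ≃ₗ⁅F⁆ h, ∀ u : h, φ (ωx u) = ωy (φ u) := by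
  refine ⟨E.quarterTurnLieEquiv hE01 hE02 hE12, fun u => ?_⟩
  obtain ⟨α, β, γ, rfl⟩ := E.exists_eq_fin_three u
  rw [E.coe_quarterTurnLieEquiv, hωx, E.quarterTurn_apply, hωy, map_smul,
    E.quarterTurn_apply_two]

/-- Over a field of characteristic `p ≥ 3`, the restricted Heisenberg algebras given by
the `p`-maps `ω_{x*}` and `ω_{y*}` are isomorphic as restricted Lie algebras. -/
theorem statement4 (F : Type*) [Field F] (p : ℕ) [CharP F p] (hp : 3 ≤ p)
    (h : Type*) [LieRing h] [LieAlgebra F h]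
    (E : Module.Basis (Fin 3) F h)
    (hE01 : ⁅E 0, E 1⁆ = E 2) (hE02 : ⁅E 0, E 2⁆ = 0) (hE12 : ⁅E 1, E 2⁆ = 0)
    (ωx ωy : h → h)
    (hωx : ∀ α β γ : F, ωx (α • E 0 + β • E 1 + γ • E 2) = α ^ p • E 2)
    (hωy : ∀ α β γ : F, ωy (α • E 0 + β • E 1 + γ • E 2) = β ^ p • E 2) :
    ∃ φ : h ≃ₗ⁅F⁆ h, ∀ u : h, φ (ωx u) = ωy (φ u) :=
  statement4_general F p h E hE01 hE02 hE12 ωx ωy hωx hωy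
end

section
/- Let F be a field of characteristic p ≥ 3 and let h be the Heisenberg algebra over F with basis (e₁, e₂, e₃). Define the p-maps ω₀(u) = 0, ω_{x*}(α·e₁ + β·e₂ + γ·e₃) = α^p·e₃, and ω_{z*}(α·e₁ + β·e₂ + γ·e₃) = γ^p·e₃. Then the three restricted Heisenberg algebras (h, ω₀), (h, ω_{x*}), (h, ω_{z*}) are pairwise non-isomorphic as restricted Lie algebras: for any two distinct maps ω, ω' among {ω₀, ω_{x*}, ω_{z*}}, there is no Lie algebra automorphism φ of h with φ(ω(u)) = ω'(φ(u)) for all u ∈ h. -/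
/-! A restricted isomorphism `φ` with `φ ∘ ω = ω' ∘ φ` transports two properties of a `p`-map:
vanishing identically, and vanishing on the centre (a Lie isomorphism maps centre onto centre).
The centre of the Heisenberg algebra is the line `F e₃`. Now `ω₀` vanishes identically,
`ω_{x*}` vanishes on the centre but not at `e₁`, and `ω_{z*}` does not vanish at `e₃`. -/

open LieAlgebra

theorem Function.Semiconj.eq_zero_iff {E M N : Type*} [Zero M] [Zero N] [EquivLike E M N]
    [ZeroHomClass E M N] {φ : E} {ω : M → M} {ω' : N → N} (hφ : Function.Semiconj φ ω ω') :
    ω = 0 ↔ ω' = 0 := by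
  constructor
  · rintro rfl
    funext v
    obtain ⟨u, rfl⟩ := EquivLike.surjective φ v
    rw [← hφ u, Pi.zero_apply, Pi.zero_apply, map_zero]
  · rintro rfl
    funext u
    apply EquivLike.injective φ
    rw [hφ u, Pi.zero_apply, Pi.zero_apply, map_zero]

section Center

variable {R L L' : Type*} [CommRing R] [LieRing L] [LieAlgebra R L] [LieRing L'] [LieAlgebra R L']

theorem LieEquiv.map_mem_center_iff (φ : L ≃ₗ⁅R⁆ L') {z : L} :
    φ z ∈ center R L' ↔ z ∈ center R L := by
  simp only [LieModule.mem_maxTrivSubmodule]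
  constructor
  · intro hz x
    refine EquivLike.injective φ ?_
    rw [φ.map_lie, hz, map_zero]
  · intro hz x
    rw [← φ.apply_symm_apply x, ← φ.map_lie, hz, map_zero]

theorem Function.Semiconj.forall_mem_center_iff {φ : L ≃ₗ⁅R⁆ L'} {ω : L → L} {ω' : L' → L'}
    (hφ : Function.Semiconj φ ω ω') :
    (∀ z ∈ center R L, ω z = 0) ↔ ∀ z ∈ center R L', ω' z = 0 := by
  constructor
  · intro h z hz
    rw [← φ.apply_symm_apply z, ← hφ, h _ (φ.map_mem_center_iff.1 (by simpa using hz)), map_zero]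
  · intro h z hz
    refine EquivLike.injective φ ?_
    rw [hφ z, h _ (φ.map_mem_center_iff.2 hz), map_zero]

end Center

section Heisenberg

variable {R L : Type*} [CommRing R] [LieRing L] [LieAlgebra R L] (E : Module.Basis (Fin 3) R L)

theorem Module.Basis.eq_repr_fin_three (u : L) :
    u = E.repr u 0 • E 0 + E.repr u 1 • E 1 + E.repr u 2 • E 2 := by
  rw [← Fin.sum_univ_three (fun i => E.repr u i • E i), E.sum_repr]

theorem heisenberg_lie_eq_smul (hE01 : ⁅E 0, E 1⁆ = E 2) (hE02 : ⁅E 0, E 2⁆ = 0)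
    (hE12 : ⁅E 1, E 2⁆ = 0) (u v : L) :
    ⁅u, v⁆ = (E.repr u 0 * E.repr v 1 - E.repr u 1 * E.repr v 0) • E 2 := by
  have hE10 : ⁅E 1, E 0⁆ = -E 2 := by rw [← lie_skew, hE01]
  have hE20 : ⁅E 2, E 0⁆ = 0 := by rw [← lie_skew, hE02, neg_zero]
  have hE21 : ⁅E 2, E 1⁆ = 0 := by rw [← lie_skew, hE12, neg_zero]
  conv_lhs => rw [E.eq_repr_fin_three u, E.eq_repr_fin_three v]
  simp only [lie_add, add_lie, lie_smul, smul_lie, lie_self, hE01, hE02, hE12, hE10, hE20, hE21]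
  module

theorem heisenberg_mem_center_iff (hE01 : ⁅E 0, E 1⁆ = E 2) (hE02 : ⁅E 0, E 2⁆ = 0)
    (hE12 : ⁅E 1, E 2⁆ = 0) (z : L) :
    z ∈ center R L ↔ E.repr z 0 = 0 ∧ E.repr z 1 = 0 := by
  simp only [LieModule.mem_maxTrivSubmodule, heisenberg_lie_eq_smul E hE01 hE02 hE12]
  constructor
  · intro hz
    exact ⟨by simpa using congrArg (E.repr · 2) (hz (E 1)),
      by simpa using congrArg (E.repr · 2) (hz (E 0))⟩
  · rintro ⟨h0, h1⟩ x
    simp [h0, h1]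

end Heisenberg

theorem statement5_general (F : Type*) [Field F] (p : ℕ) (hp : 3 ≤ p)
    (h : Type*) [LieRing h] [LieAlgebra F h]
    (E : Module.Basis (Fin 3) F h)
    (hE01 : ⁅E 0, E 1⁆ = E 2) (hE02 : ⁅E 0, E 2⁆ = 0) (hE12 : ⁅E 1, E 2⁆ = 0)
    (ω0 ωx ωz : h → h)
    (hω0 : ∀ u : h, ω0 u = 0)
    (hωx : ∀ α β γ : F, ωx (α • E 0 + β • E 1 + γ • E 2) = α ^ p • E 2)
    (hωz : ∀ α β γ : F, ωz (α • E 0 + β • E 1 + γ • E 2) = γ ^ p • E 2) :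
    ∀ ω ω' : h → h, ω ∈ ({ω0, ωx, ωz} : Set (h → h)) → ω' ∈ ({ω0, ωx, ωz} : Set (h → h)) →
      ω ≠ ω' → ¬ ∃ φ : h ≃ₗ⁅F⁆ h, ∀ u : h, φ (ω u) = ω' (φ u) := by
  have hcenter := heisenberg_mem_center_iff E hE01 hE02 hE12
  have hω0_zero : ω0 = 0 := funext hω0
  have hω0_center : ∀ z ∈ center F h, ω0 z = 0 := fun z _ => hω0 z
  have hωx_ne : ωx ≠ 0 := fun h0 => E.ne_zero 2 (by simpa [h0] using (hωx 1 0 0).symm)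
  have hωx_center : ∀ z ∈ center F h, ωx z = 0 := fun z hz => by
    rw [E.eq_repr_fin_three z, hωx, ((hcenter z).1 hz).1, zero_pow (by omega), zero_smul]
  have hωz_ne : ωz ≠ 0 := fun h0 => E.ne_zero 2 (by simpa [h0] using (hωz 0 0 1).symm)
  have hωz_center : ¬ ∀ z ∈ center F h, ωz z = 0 := fun h0 =>
    E.ne_zero 2 (by simpa [h0 _ ((hcenter (E 2)).2 (by simp))] using (hωz 0 0 1).symm)
  rintro ω ω' hω hω' hne ⟨φ, hφ⟩
  have hzero := Function.Semiconj.eq_zero_iff hφ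
  have hcenter_zero := Function.Semiconj.forall_mem_center_iff hφ
  simp only [Set.mem_insert_iff, Set.mem_singleton_iff] at hω hω'
  rcases hω with rfl | rfl | rfl <;> rcases hω' with rfl | rfl | rfl <;> tauto

/-- Over a field of characteristic `p ≥ 3`, the three restricted Heisenberg algebras
given by the `p`-maps `ω₀ = 0`, `ω_{x*}` and `ω_{z*}` are pairwise non-isomorphic as
restricted Lie algebras. -/
theorem statement5 (F : Type*) [Field F] (p : ℕ) [CharP F p] (hp : 3 ≤ p)
    (h : Type*) [LieRing h] [LieAlgebra F h]
    (E : Module.Basis (Fin 3) F h)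
    (hE01 : ⁅E 0, E 1⁆ = E 2) (hE02 : ⁅E 0, E 2⁆ = 0) (hE12 : ⁅E 1, E 2⁆ = 0)
    (ω0 ωx ωz : h → h)
    (hω0 : ∀ u : h, ω0 u = 0)
    (hωx : ∀ α β γ : F, ωx (α • E 0 + β • E 1 + γ • E 2) = α ^ p • E 2)
    (hωz : ∀ α β γ : F, ωz (α • E 0 + β • E 1 + γ • E 2) = γ ^ p • E 2) :
    ∀ ω ω' : h → h, ω ∈ ({ω0, ωx, ωz} : Set (h → h)) → ω' ∈ ({ω0, ωx, ωz} : Set (h → h)) →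
      ω ≠ ω' → ¬ ∃ φ : h ≃ₗ⁅F⁆ h, ∀ u : h, φ (ω u) = ω' (φ u) :=
  statement5_general F p hp h E hE01 hE02 hE12 ω0 ωx ωz hω0 hωx hωz
end

section
/- Let L be a restricted Lie algebra over a field F of characteristic 2 with 2-map ω. On the F-module of sequences f : ℕ → L (representing formal power series Σ tⁿ f(n) with coefficients in L), define the extended bracket B(f,g)(n) = Σ_{i+j=n} ⁅f(i), g(j)⁆ and the extended 2-map S(f)(n) = (ω(f(m)) if n = 2m is even, 0 if n is odd) + Σ_{i<j, i+j=n} ⁅f(i), f(j)⁆. Then for all sequences f, g and all λ ∈ F: (1) S(λ·f) = λ²·S(f); (2) B(f, S(g)) = B(B(f,g), g); (3) S(f + g) = S(f) + S(g) + B(f,g). Hence S is a 2-map for the extended bracket, making the formal power series into a restricted Lie algebra in characteristic 2. -/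
/-!
Split a sum over `i + j = n` into the pairs `i < j`, their mirror images, and the diagonal term
`i = j = n / 2` (present only for even `n`); on the diagonal each identity is the corresponding
one for `ω`. Off the diagonal, characteristic 2 makes the bracket symmetric, which gives
additivity, and turns Jacobi into `⁅x, ⁅y, z⁆⁆ = ⁅⁅x, y⁆, z⁆ + ⁅⁅x, z⁆, y⁆`, which rewrites
`B(f, S g)(n)` as the triple sum `∑_{i+a+b=n} ⁅⁅f i, g a⁆, g b⁆ = B(B(f, g), g)(n)`.
-/

/-- The extended bracket on formal power series (sequences) with coefficients in `L`. -/
def extBracket {L : Type*} [LieRing L] (f g : ℕ → L) : ℕ → L :=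
  fun n => ∑ ij ∈ Finset.HasAntidiagonal.antidiagonal n, ⁅f ij.1, g ij.2⁆

/-- The extended 2-map on formal power series (sequences) with coefficients in `L`. -/
def extTwoMap {L : Type*} [LieRing L] (ω : L → L) (f : ℕ → L) : ℕ → L :=
  fun n => (if Even n then ω (f (n / 2)) else 0) +
    ∑ ij ∈ (Finset.HasAntidiagonal.antidiagonal n).filter (fun ij => ij.1 < ij.2), ⁅f ij.1, f ij.2⁆

open Finset

theorem Finset.sum_antidiagonal_antidiagonal_assoc {A M : Type*} [AddCommMonoid A]
    [HasAntidiagonal A] [AddCommMonoid M] (n : A) (h : A → A → A → M) :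
    ∑ p ∈ antidiagonal n, ∑ q ∈ antidiagonal p.2, h p.1 q.1 q.2 =
      ∑ p ∈ antidiagonal n, ∑ q ∈ antidiagonal p.1, h q.1 q.2 p.2 := by
  simp only [sum_sigma']
  apply sum_nbij' (fun ⟨⟨i, _⟩, ⟨a, b⟩⟩ ↦ ⟨(i + a, b), (i, a)⟩)
    (fun ⟨⟨_, b⟩, ⟨i, a⟩⟩ ↦ ⟨(i, a + b), (a, b)⟩) <;> aesop (add simp [add_assoc])

theorem Finset.Nat.sum_antidiagonal_eq_sum_lt_add_ite_even {M : Type*} [AddCommMonoid M]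
    (n : ℕ) (h : ℕ → ℕ → M) :
    ∑ q ∈ antidiagonal n, h q.1 q.2 =
      ∑ q ∈ (antidiagonal n).filter (fun q => q.1 < q.2), (h q.1 q.2 + h q.2 q.1) +
        if Even n then h (n / 2) (n / 2) else 0 := by
  have swap : ∑ q ∈ (antidiagonal n).filter (fun q => q.1 < q.2), h q.2 q.1 =
      ∑ q ∈ (antidiagonal n).filter (fun q => q.2 < q.1), h q.1 q.2 := by
    apply sum_nbij' Prod.swap Prod.swap <;> simp +contextual [add_comm]
  have gt : ((antidiagonal n).filter fun q => ¬q.1 < q.2).filter (fun q => q.2 < q.1) =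
      (antidiagonal n).filter (fun q => q.2 < q.1) := by
    rw [filter_filter]
    exact filter_congr fun q _ => by omega
  have diag : ((antidiagonal n).filter fun q => ¬q.1 < q.2).filter (fun q => ¬q.2 < q.1) =
      if Even n then {(n / 2, n / 2)} else ∅ := by
    ext ⟨a, b⟩
    split_ifs <;> simp [Prod.ext_iff] <;> grind
  rw [sum_add_distrib, swap,
    ← sum_filter_add_sum_filter_not (antidiagonal n) (fun q => q.1 < q.2),
    ← sum_filter_add_sum_filter_not ((antidiagonal n).filter fun q => ¬q.1 < q.2)
      (fun q => q.2 < q.1), gt, diag, add_assoc]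
  split_ifs <;> simp

theorem neg_eq_self_of_charTwo (R : Type*) {M : Type*} [Ring R] [CharP R 2] [AddCommGroup M]
    [Module R M] (x : M) : -x = x := by
  rw [neg_eq_iff_add_eq_zero, ← two_smul R x, CharTwo.two_eq_zero, zero_smul]

section

variable {L : Type*} [LieRing L] {ω : L → L}

theorem lie_comm_of_charTwo (F : Type*) [CommRing F] [CharP F 2] [LieAlgebra F L] (x y : L) :
    ⁅x, y⁆ = ⁅y, x⁆ := by
  rw [← lie_skew, neg_eq_self_of_charTwo F]

theorem lie_lie_of_charTwo (F : Type*) [CommRing F] [CharP F 2] [LieAlgebra F L] (x y z : L) :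
    ⁅x, ⁅y, z⁆⁆ = ⁅⁅x, y⁆, z⁆ + ⁅⁅x, z⁆, y⁆ := by
  rw [leibniz_lie, lie_comm_of_charTwo F y]

theorem extTwoMap_smul (F : Type*) [CommRing F] [LieAlgebra F L]
    (hω : ∀ (c : F) (x : L), ω (c • x) = c ^ 2 • ω x) (c : F) (f : ℕ → L) :
    extTwoMap ω (c • f) = c ^ 2 • extTwoMap ω f := by
  funext n
  simp only [extTwoMap, Pi.smul_apply, hω, smul_lie, lie_smul, smul_smul, ← pow_two, smul_add,
    smul_sum, smul_ite, smul_zero]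

theorem lie_extTwoMap (F : Type*) [CommRing F] [CharP F 2] [LieAlgebra F L]
    (hω : ∀ x y : L, ⁅x, ω y⁆ = ⁅⁅x, y⁆, y⁆) (x : L) (g : ℕ → L) (m : ℕ) :
    ⁅x, extTwoMap ω g m⁆ = ∑ q ∈ antidiagonal m, ⁅⁅x, g q.1⁆, g q.2⁆ := by
  rw [Nat.sum_antidiagonal_eq_sum_lt_add_ite_even m fun a b => ⁅⁅x, g a⁆, g b⁆, extTwoMap,
    add_comm, lie_add, lie_sum, apply_ite (fun y => ⁅x, y⁆), lie_zero, hω]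
  simp only [lie_lie_of_charTwo F]

theorem extBracket_extTwoMap (F : Type*) [CommRing F] [CharP F 2] [LieAlgebra F L]
    (hω : ∀ x y : L, ⁅x, ω y⁆ = ⁅⁅x, y⁆, y⁆) (f g : ℕ → L) :
    extBracket f (extTwoMap ω g) = extBracket (extBracket f g) g := by
  funext n
  simp only [extBracket, lie_extTwoMap F hω, sum_lie]
  exact sum_antidiagonal_antidiagonal_assoc n fun i a b => ⁅⁅f i, g a⁆, g b⁆

theorem extTwoMap_add (F : Type*) [CommRing F] [CharP F 2] [LieAlgebra F L]
    (hω : ∀ x y : L, ω (x + y) = ω x + ω y + ⁅x, y⁆) (f g : ℕ → L) :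
    extTwoMap ω (f + g) = extTwoMap ω f + extTwoMap ω g + extBracket f g := by
  funext n
  simp only [extTwoMap, extBracket, Pi.add_apply,
    Nat.sum_antidiagonal_eq_sum_lt_add_ite_even n fun a b => ⁅f a, g b⁆]
  have comm (i j : ℕ) : ⁅g i, f j⁆ = ⁅f j, g i⁆ := lie_comm_of_charTwo F _ _
  simp only [hω, add_lie, lie_add, comm]
  split_ifs <;> simp only [sum_add_distrib] <;> abel

end

/-- The extended 2-map is a 2-map for the extended bracket: formal power series over a
restricted Lie algebra in characteristic 2 again form a restricted Lie algebra. -/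
theorem statement10 (F : Type*) [Field F] [CharP F 2]
    (L : Type*) [LieRing L] [LieAlgebra F L]
    (ω : L → L)
    (hω1 : ∀ (c : F) (x : L), ω (c • x) = c ^ 2 • ω x)
    (hω2 : ∀ x y : L, ⁅x, ω y⁆ = ⁅⁅x, y⁆, y⁆)
    (hω3 : ∀ x y : L, ω (x + y) = ω x + ω y + ⁅x, y⁆) :
    (∀ (c : F) (f : ℕ → L), extTwoMap ω (c • f) = c ^ 2 • extTwoMap ω f) ∧
    (∀ f g : ℕ → L, extBracket f (extTwoMap ω g) = extBracket (extBracket f g) g) ∧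
    (∀ f g : ℕ → L, extTwoMap ω (f + g) = extTwoMap ω f + extTwoMap ω g + extBracket f g) :=
  ⟨extTwoMap_smul F hω1, extBracket_extTwoMap F hω2, extTwoMap_add F hω3⟩
end

section
/- Let L be a restricted Lie algebra over a field F of characteristic 2 with 2-map ω, and let M be a restricted module over (L, ω). Let φ : L → M be an F-linear map. Define Φ(x,y) = x•φ(y) + y•φ(x) + φ(⁅x,y⁆) (the Chevalley–Eilenberg differential of φ in characteristic 2) and w(x) = φ(ω(x)) + x•φ(x). Then for all x, z ∈ L: x•Φ(x,z) + z•w(x) + Φ(ω(x), z) + Φ(⁅x,z⁆, x) = 0. (This is the identity d²_{*₂} ∘ d¹_{*₂} = 0 for the restricted cochain complex in characteristic 2.) -/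
/-- The identity `d²_{*₂} ∘ d¹_{*₂} = 0` for the restricted cochain complex of a
restricted Lie algebra in characteristic 2 with coefficients in a restricted module. -/
theorem statement11 (F : Type*) [Field F] [CharP F 2]
    (L : Type*) [LieRing L] [LieAlgebra F L]
    (M : Type*) [AddCommGroup M] [Module F M] [LieRingModule L M] [LieModule F L M]
    (ω : L → L)
    (hω1 : ∀ (c : F) (x : L), ω (c • x) = c ^ 2 • ω x)
    (hω2 : ∀ x y : L, ⁅x, ω y⁆ = ⁅⁅x, y⁆, y⁆)
    (hω3 : ∀ x y : L, ω (x + y) = ω x + ω y + ⁅x, y⁆)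
    (hres : ∀ (x : L) (m : M), ⁅ω x, m⁆ = ⁅x, ⁅x, m⁆⁆)
    (φ : L →ₗ[F] M)
    (Φ : L → L → M) (hΦ : ∀ x y : L, Φ x y = ⁅x, φ y⁆ + ⁅y, φ x⁆ + φ ⁅x, y⁆)
    (w : L → M) (hw : ∀ x : L, w x = φ (ω x) + ⁅x, φ x⁆) :
    ∀ x z : L, ⁅x, Φ x z⁆ + ⁅z, w x⁆ + Φ (ω x) z + Φ ⁅x, z⁆ x = 0 := by
  intro x z
  have h2 : ∀ m : M, m + m = 0 := fun m => by
    have h := two_smul F m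
    rw [show (2 : F) = 0 from by exact_mod_cast CharP.cast_eq_zero F 2] at h
    simpa using h.symm
  have hlz : ⁅ω x, z⁆ = ⁅⁅x, z⁆, x⁆ := by
    rw [← lie_skew x z, neg_lie, ← lie_skew (ω x) z, hω2]
  have hleib : ⁅⁅x, z⁆, φ x⁆ = ⁅x, ⁅z, φ x⁆⁆ - ⁅z, ⁅x, φ x⁆⁆ := by
    rw [lie_lie]
  simp only [hΦ, hw, hres, hlz, hleib, lie_add, map_add]
  abel_nf
  simp only [two_zsmul]
  simp [h2]
end

section
/- Let L be a restricted Lie algebra over a field F of characteristic 2 with 2-map ω, and let M be a restricted module over (L, ω). Let φ : L × L → M be an alternating F-bilinear map and w : L → M a map satisfying w(λx) = λ²·w(x) and w(x+y) = w(x) + w(y) + φ(x,y) (so (φ, w) is a restricted 2-cochain). Define δ²w(x,z) = x•φ(x,z) + z•w(x) + φ(ω(x), z) + φ(⁅x,z⁆, x) and d²φ(x,y,z) = x•φ(y,z) + y•φ(x,z) + z•φ(x,y) + φ(⁅x,y⁆, z) + φ(⁅x,z⁆, y) + φ(⁅y,z⁆, x). Then for all x, y, z ∈ L: δ²w(x+y,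 z) = δ²w(x, z) + δ²w(y, z) + d²φ(x, y, z). (Hence (d²φ, δ²w) is again a restricted cochain.) -/
/-- The restricted differential of a restricted 2-cochain is again a restricted cochain:
`δ²w (x+y, z) = δ²w (x, z) + δ²w (y, z) + d²φ (x, y, z)` (characteristic 2). -/
theorem statement12 (F : Type*) [Field F] [CharP F 2]
    (L : Type*) [LieRing L] [LieAlgebra F L]
    (M : Type*) [AddCommGroup M] [Module F M] [LieRingModule L M] [LieModule F L M]
    (ω : L → L)
    (hω1 : ∀ (c : F) (x : L), ω (c • x) = c ^ 2 • ω x)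
    (hω2 : ∀ x y : L, ⁅x, ω y⁆ = ⁅⁅x, y⁆, y⁆)
    (hω3 : ∀ x y : L, ω (x + y) = ω x + ω y + ⁅x, y⁆)
    (hres : ∀ (x : L) (m : M), ⁅ω x, m⁆ = ⁅x, ⁅x, m⁆⁆)
    (φ : L →ₗ[F] L →ₗ[F] M) (halt : ∀ x : L, φ x x = 0)
    (w : L → M)
    (hw1 : ∀ (c : F) (x : L), w (c • x) = c ^ 2 • w x)
    (hw2 : ∀ x y : L, w (x + y) = w x + w y + φ x y)
    (dw : L → L → M)
    (hdw : ∀ x z : L, dw x z = ⁅x, φ x z⁆ + ⁅z, w x⁆ + φ (ω x) z + φ ⁅x, z⁆ x)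
    (dφ : L → L → L → M)
    (hdφ : ∀ x y z : L, dφ x y z =
      ⁅x, φ y z⁆ + ⁅y, φ x z⁆ + ⁅z, φ x y⁆ + φ ⁅x, y⁆ z + φ ⁅x, z⁆ y + φ ⁅y, z⁆ x) :
    ∀ x y z : L, dw (x + y) z = dw x z + dw y z + dφ x y z := by
  intro x y z
  simp only [hdw, hdφ, hw2, hω3, map_add, LinearMap.add_apply, add_lie, lie_add]
  abel
end

section
/- Let L be a restricted Lie algebra over a field F of characteristic 2 with 2-map ω, and let M be a restricted module over (L, ω). Let φ : L × L → M be an alternating F-bilinear map and w : L → M a map satisfying w(λx) = λ²·w(x) and w(x+y) = w(x) + w(y) + φ(x,y). Define ψ(x,z) = x•φ(x,z) + z•w(x) + φ(ω(x), z) + φ(⁅x,z⁆, x) and Φ(x,y,z) = x•φ(y,z) + y•φ(x,z) + z•φ(x,y) + φ(⁅x,y⁆, z) + φ(⁅x,z⁆, y) + φ(⁅y,z⁆, x). Then for all x, z₂, z₃ ∈ L: x•Φ(x,z₂,z₃) + z₂•ψ(x,z₃) + z₃•ψ(x,z₂) + Φ(ω(x), z₂, z₃) + Φ(⁅x,z₂⁆,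 x, z₃) + Φ(⁅x,z₃⁆, x, z₂) + ψ(x, ⁅z₂,z₃⁆) = 0. (This is the identity δ³ ∘ δ² = 0 for the restricted cochain complex in characteristic 2.) -/
/-- The identity `δ³ ∘ δ² = 0` for the restricted cochain complex of a restricted Lie
algebra in characteristic 2 with coefficients in a restricted module. -/
theorem statement13 (F : Type*) [Field F] [CharP F 2]
    (L : Type*) [LieRing L] [LieAlgebra F L]
    (M : Type*) [AddCommGroup M] [Module F M] [LieRingModule L M] [LieModule F L M]
    (ω : L → L)
    (hω1 : ∀ (c : F) (x : L), ω (c • x) = c ^ 2 • ω x)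
    (hω2 : ∀ x y : L, ⁅x, ω y⁆ = ⁅⁅x, y⁆, y⁆)
    (hω3 : ∀ x y : L, ω (x + y) = ω x + ω y + ⁅x, y⁆)
    (hres : ∀ (x : L) (m : M), ⁅ω x, m⁆ = ⁅x, ⁅x, m⁆⁆)
    (φ : L →ₗ[F] L →ₗ[F] M) (halt : ∀ x : L, φ x x = 0)
    (w : L → M)
    (hw1 : ∀ (c : F) (x : L), w (c • x) = c ^ 2 • w x)
    (hw2 : ∀ x y : L, w (x + y) = w x + w y + φ x y)
    (ψ : L → L → M)
    (hψ : ∀ x z : L, ψ x z = ⁅x, φ x z⁆ + ⁅z, w x⁆ + φ (ω x) z + φ ⁅x, z⁆ x)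
    (Φ : L → L → L → M)
    (hΦ : ∀ x y z : L, Φ x y z =
      ⁅x, φ y z⁆ + ⁅y, φ x z⁆ + ⁅z, φ x y⁆ + φ ⁅x, y⁆ z + φ ⁅x, z⁆ y + φ ⁅y, z⁆ x) :
    ∀ x z₂ z₃ : L,
      ⁅x, Φ x z₂ z₃⁆ + ⁅z₂, ψ x z₃⁆ + ⁅z₃, ψ x z₂⁆ + Φ (ω x) z₂ z₃ +
        Φ ⁅x, z₂⁆ x z₃ + Φ ⁅x, z₃⁆ x z₂ + ψ x ⁅z₂, z₃⁆ = 0 := by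
  intro x z₂ z₃
  have hanti : ∀ a b : L, φ a b = -φ b a := by
    intro a b
    have h := halt (a + b)
    simp only [map_add, LinearMap.add_apply, halt, zero_add, add_zero] at h
    rw [eq_neg_iff_add_eq_zero, add_comm]
    exact h
  have hω2' : ∀ a b : L, ⁅ω a, b⁆ = ⁅⁅a, b⁆, a⁆ := by
    intro a b
    rw [← lie_skew, hω2, ← neg_lie, lie_skew]
  simp only [hψ, hΦ]
  rw [show (⁅x, ⁅z₂, z₃⁆⁆ : L) = ⁅⁅x, z₂⁆, z₃⁆ + ⁅z₂, ⁅x, z₃⁆⁆ from leibniz_lie x z₂ z₃]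
  simp only [lie_add, add_lie, map_add, LinearMap.add_apply, hres, hω2', lie_lie,
    map_sub, LinearMap.sub_apply, lie_self, lie_zero, zero_lie, map_zero,
    sub_zero, zero_sub, lie_neg, neg_lie, map_neg, LinearMap.neg_apply,
    LinearMap.zero_apply]
  have skew : ∀ a b : L, ⁅a, b⁆ = -⁅b, a⁆ := fun a b => by rw [← lie_skew]
  have hA : (⁅x, ⁅z₂, z₃⁆⁆ : L) = ⁅z₂, ⁅x, z₃⁆⁆ - ⁅z₃, ⁅x, z₂⁆⁆ := by
    rw [leibniz_lie x z₂ z₃, skew ⁅x, z₂⁆ z₃]; abel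
  have hA' : (⁅x, ⁅z₃, z₂⁆⁆ : L) = -(⁅z₂, ⁅x, z₃⁆⁆ - ⁅z₃, ⁅x, z₂⁆⁆) := by
    rw [skew z₃ z₂, lie_neg, hA]
  rw [hA', hA,
    show (φ ⁅z₂, z₃⁆) x = -((φ x) ⁅z₂, z₃⁆) from hanti _ _,
    show (φ ⁅z₂, z₃⁆) (ω x) = -((φ (ω x)) ⁅z₂, z₃⁆) from hanti _ _,
    show (φ ⁅x, z₃⁆) ⁅x, z₂⁆ = -((φ ⁅x, z₂⁆) ⁅x, z₃⁆) from hanti _ _]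
  simp only [map_neg, map_sub, LinearMap.neg_apply, LinearMap.sub_apply, lie_neg]
  have h2 : ∀ m : M, (2 : ℤ) • m = 0 := by
    intro m
    have hm : m + m = 0 := by
      have : ((2 : ℕ) : F) • m = 0 := by
        rw [CharP.cast_eq_zero F 2, zero_smul]
      rwa [Nat.cast_ofNat, two_smul] at this
    rw [two_zsmul]; exact hm
  abel_nf
  simp only [neg_smul, h2, zero_add, add_zero, smul_zero, neg_zero]
end

section
/- Let L be a restricted Lie algebra over a field F of characteristic 2 with 2-map ω. Let φ : L × L → F be an alternating F-bilinear map satisfying the Chevalley–Eilenberg 2-cocycle condition φ(x, ⁅y,z⁆) + φ(y, ⁅z,x⁆) + φ(z, ⁅x,y⁆) = 0 for all x,y,z ∈ L, and let w : L → F be a map with w(λx) = λ²·w(x) and w(x+y) = w(x) + w(y) + φ(x,y). On g = L × F define a bracket by ⁅(x,u), (y,v)⁆' = (⁅x,y⁆, φ(x,y)) and a map S(x,u) = (ω(x), w(x)). Then S satisfies the 2-map axioms for ⁅·,·⁆' (i.e., S(λ·p) = λ²·S(p), ⁅p, S(q)⁆' = ⁅⁅p,q⁆', q⁆', and S(p+q)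 = S(p) + S(q) + ⁅p,q⁆' for all p, q ∈ g) if and only if φ(x, ω(y)) = φ(⁅x,y⁆, y) for all x, y ∈ L. -/
/-- A scalar pair `(φ, w)` defines a restricted central extension `g = L × F` of a
restricted Lie algebra in characteristic 2 if and only if `φ (x, ω y) = φ (⁅x,y⁆, y)`. -/
theorem statement14 (F : Type*) [Field F] [CharP F 2]
    (L : Type*) [LieRing L] [LieAlgebra F L]
    (ω : L → L)
    (hω1 : ∀ (c : F) (x : L), ω (c • x) = c ^ 2 • ω x)
    (hω2 : ∀ x y : L, ⁅x, ω y⁆ = ⁅⁅x, y⁆, y⁆)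
    (hω3 : ∀ x y : L, ω (x + y) = ω x + ω y + ⁅x, y⁆)
    (φ : L →ₗ[F] L →ₗ[F] F) (halt : ∀ x : L, φ x x = 0)
    (hcocycle : ∀ x y z : L, φ x ⁅y, z⁆ + φ y ⁅z, x⁆ + φ z ⁅x, y⁆ = 0)
    (w : L → F)
    (hw1 : ∀ (c : F) (x : L), w (c • x) = c ^ 2 * w x)
    (hw2 : ∀ x y : L, w (x + y) = w x + w y + φ x y)
    (B : L × F → L × F → L × F)
    (hB : ∀ p q : L × F, B p q = (⁅p.1, q.1⁆, φ p.1 q.1))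
    (S : L × F → L × F)
    (hS : ∀ p : L × F, S p = (ω p.1, w p.1)) :
    ((∀ (c : F) (p : L × F), S (c • p) = c ^ 2 • S p) ∧
     (∀ p q : L × F, B p (S q) = B (B p q) q) ∧
     (∀ p q : L × F, S (p + q) = S p + S q + B p q)) ↔
    (∀ x y : L, φ x (ω y) = φ ⁅x, y⁆ y) := by
  constructor
  · rintro ⟨-, h2, -⟩ x y
    have := h2 (x, (0:F)) (y, (0:F))
    simp only [hS, hB] at this
    exact (Prod.mk.injEq _ _ _ _).mp this |>.2
  · intro h
    refine ⟨?_, ?_, ?_⟩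
    · intro c p
      have : (c • p).1 = c • p.1 := rfl
      rw [hS, hS, this, hω1, hw1, Prod.smul_def]
      simp [smul_eq_mul]
    · intro p q
      rw [hB, hB, hB, hS]
      exact Prod.ext (hω2 p.1 q.1) (h p.1 q.1)
    · intro p q
      rw [hS, hS, hS, hB]
      exact Prod.ext (hω3 p.1 q.1) (hw2 p.1 q.1)
end

section
/- Let L be a Lie algebra over a field F of characteristic 2, let n ≥ 1, and for i = 0, …, n let mᵢ : L × L → L be alternating F-bilinear maps and ωᵢ : L → L maps satisfying ωᵢ(x+y) = ωᵢ(x) + ωᵢ(y) + mᵢ(x,y) for all x, y ∈ L. Define Obs¹(x,y,z) = Σ_{i=1}^{n} ( mᵢ(x, m_{n+1−i}(y,z)) + mᵢ(y, m_{n+1−i}(z,x)) + mᵢ(z, m_{n+1−i}(x,y)) ) and Obs²(x,y) = Σ_{i=1}^{n} ( mᵢ(y, ω_{n+1−i}(x)) + mᵢ(m_{n+1−i}(y,x), x) ). Then for all x₁, x₂, y ∈ L: Obs²(x₁ + x₂, y) = Obs²(x₁, y) + Obs²(x₂, y) + Obs¹(x₁, x₂, y). -/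
/-!
Expanding `Obs²(x₁ + x₂, y)` termwise with the additivity defect of `ω_{n+1-i}` leaves three
cross terms per index `i`, which are the three terms of `Obs¹(x₁, x₂, y)` up to swapping the
arguments of `mᵢ` and `m_{n+1-i}`. In characteristic 2 every alternating bilinear map is
symmetric, so these swaps are harmless.
-/

theorem LinearMap.IsAlt.apply_comm_of_charTwo {R M N : Type*} [CommRing R] [CharP R 2]
    [AddCommMonoid M] [Module R M] [AddCommGroup N] [Module R N] {B : M →ₗ[R] M →ₗ[R] N}
    (H : B.IsAlt) (x y : M) : B x y = B y x := by
  rw [← H.neg, ← neg_one_smul R, CharTwo.neg_eq, one_smul]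

theorem apply_quadratic_add_of_symm {R M : Type*} [CommSemiring R] [AddCommMonoid M] [Module R M]
    {a b : M →ₗ[R] M →ₗ[R] M} {q : M → M} (ha : ∀ u v, a u v = a v u) (hb : ∀ u v, b u v = b v u)
    (hq : ∀ u v, q (u + v) = q u + q v + b u v) (x₁ x₂ y : M) :
    a y (q (x₁ + x₂)) + a (b y (x₁ + x₂)) (x₁ + x₂) =
      (a y (q x₁) + a (b y x₁) x₁) + (a y (q x₂) + a (b y x₂) x₂) +
        (a x₁ (b x₂ y) + a x₂ (b y x₁) + a y (b x₁ x₂)) := by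
  have h₁ : a (b y x₁) x₂ = a x₂ (b y x₁) := ha _ _
  have h₂ : a (b y x₂) x₁ = a x₁ (b x₂ y) := by rw [ha, hb]
  simp only [hq, map_add, LinearMap.add_apply, h₁, h₂]
  abel

theorem statement15_general (F : Type*) [Field F] [CharP F 2]
    (L : Type*) [LieRing L] [LieAlgebra F L]
    (n : ℕ)
    (m : ℕ → L →ₗ[F] L →ₗ[F] L) (w : ℕ → L → L)
    (halt : ∀ i ≤ n, ∀ x : L, m i x x = 0)
    (hadd : ∀ i ≤ n, ∀ x y : L, w i (x + y) = w i x + w i y + m i x y)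
    (O1 : L → L → L → L)
    (hO1 : ∀ x y z : L, O1 x y z = ∑ i ∈ Finset.Icc 1 n,
      (m i x (m (n + 1 - i) y z) + m i y (m (n + 1 - i) z x) + m i z (m (n + 1 - i) x y)))
    (O2 : L → L → L)
    (hO2 : ∀ x y : L, O2 x y = ∑ i ∈ Finset.Icc 1 n,
      (m i y (w (n + 1 - i) x) + m i (m (n + 1 - i) y x) x)) :
    ∀ x₁ x₂ y : L, O2 (x₁ + x₂) y = O2 x₁ y + O2 x₂ y + O1 x₁ x₂ y := by
  have hsymm : ∀ i ≤ n, ∀ u v : L, m i u v = m i v u := fun i hi =>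
    LinearMap.IsAlt.apply_comm_of_charTwo (halt i hi)
  intro x₁ x₂ y
  simp only [hO1, hO2, ← Finset.sum_add_distrib]
  refine Finset.sum_congr rfl fun i hi => ?_
  have hin : i ≤ n := (Finset.mem_Icc.mp hi).2
  have hkn : n + 1 - i ≤ n := by have := (Finset.mem_Icc.mp hi).1; omega
  exact apply_quadratic_add_of_symm (hsymm i hin) (hsymm _ hkn) (hadd _ hkn) x₁ x₂ y

/-- The obstruction pair `(Obs¹, Obs²)` of an `n`-th order restricted deformation in
characteristic 2 is a restricted 3-cochain:
`Obs² (x₁+x₂, y) = Obs² (x₁, y) + Obs² (x₂, y) + Obs¹ (x₁, x₂, y)`. -/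
theorem statement15 (F : Type*) [Field F] [CharP F 2]
    (L : Type*) [LieRing L] [LieAlgebra F L]
    (n : ℕ) (hn : 1 ≤ n)
    (m : ℕ → L →ₗ[F] L →ₗ[F] L) (w : ℕ → L → L)
    (halt : ∀ i ≤ n, ∀ x : L, m i x x = 0)
    (hadd : ∀ i ≤ n, ∀ x y : L, w i (x + y) = w i x + w i y + m i x y)
    (O1 : L → L → L → L)
    (hO1 : ∀ x y z : L, O1 x y z = ∑ i ∈ Finset.Icc 1 n,
      (m i x (m (n + 1 - i) y z) + m i y (m (n + 1 - i) z x) + m i z (m (n + 1 - i) x y)))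
    (O2 : L → L → L)
    (hO2 : ∀ x y : L, O2 x y = ∑ i ∈ Finset.Icc 1 n,
      (m i y (w (n + 1 - i) x) + m i (m (n + 1 - i) y x) x)) :
    ∀ x₁ x₂ y : L, O2 (x₁ + x₂) y = O2 x₁ y + O2 x₂ y + O1 x₁ x₂ y :=
  statement15_general F L n m w halt hadd O1 hO1 O2 hO2
end

section
/- Let F be a field of characteristic 2 and let h be the Heisenberg algebra over F with basis (e₁, e₂, e₃). A map ω : h → h satisfies the three 2-map axioms (ω(λu) = λ²·ω(u); ⁅u, ω(v)⁆ = ⁅⁅u,v⁆, v⁆; ω(u+v) = ω(u) + ω(v) + ⁅u,v⁆, for all λ ∈ F and u, v ∈ h) if and only if there exist a, b, c ∈ F such that ω(α·e₁ + β·e₂ + γ·e₃) = (α²·a + β²·b + γ²·c + α·β)·e₃ for all α, β, γ ∈ F. -/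
/-!
In the Heisenberg algebra `⁅u, v⁆ = (α β' - α' β) • e₃`, so every double bracket vanishes and
the axiom `⁅u, ω v⁆ = ⁅⁅u, v⁆, v⁆` says exactly that `ω` takes values in the centre `F • e₃`.
Homogeneity and the additivity defect `⁅u, v⁆` then determine `ω` from `a, b, c`, the
`e₃`-coordinates of `ω e₁, ω e₂, ω e₃`. Conversely the formula is homogeneous of degree two, and its
additivity defect `α β' + α' β` equals `α β' - α' β` because `2 = 0`.
-/

section

variable {R L : Type*} [CommRing R] [LieRing L] [LieAlgebra R L]

variable (R) in
def IsTwoMap (ω : L → L) : Prop :=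
  (∀ (c : R) (u : L), ω (c • u) = c ^ 2 • ω u) ∧
  (∀ u v : L, ⁅u, ω v⁆ = ⁅⁅u, v⁆, v⁆) ∧
  (∀ u v : L, ω (u + v) = ω u + ω v + ⁅u, v⁆)

theorem Module.Basis.repr_smul_add_fin_three (E : Module.Basis (Fin 3) R L) (u : L) :
    E.repr u 0 • E 0 + E.repr u 1 • E 1 + E.repr u 2 • E 2 = u := by
  rw [← Fin.sum_univ_three (fun i => E.repr u i • E i), E.sum_repr]

structure Module.Basis.IsHeisenberg (E : Module.Basis (Fin 3) R L) : Prop where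
  lie_zero_one : ⁅E 0, E 1⁆ = E 2
  lie_zero_two : ⁅E 0, E 2⁆ = 0
  lie_one_two : ⁅E 1, E 2⁆ = 0

namespace Module.Basis.IsHeisenberg

variable {E : Module.Basis (Fin 3) R L}

theorem lie_coords (hE : E.IsHeisenberg) (α β γ α' β' γ' : R) :
    ⁅α • E 0 + β • E 1 + γ • E 2, α' • E 0 + β' • E 1 + γ' • E 2⁆
      = (α * β' - α' * β) • E 2 := by
  have h10 : ⁅E 1, E 0⁆ = -E 2 := by rw [← lie_skew, hE.lie_zero_one]
  have h20 : ⁅E 2, E 0⁆ = 0 := by rw [← lie_skew, hE.lie_zero_two, neg_zero]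
  have h21 : ⁅E 2, E 1⁆ = 0 := by rw [← lie_skew, hE.lie_one_two, neg_zero]
  simp only [lie_add, add_lie, lie_smul, smul_lie, lie_self, hE.lie_zero_one, hE.lie_zero_two,
    hE.lie_one_two, h10, h20, h21, smul_zero, smul_neg]
  module

theorem lie_eq (hE : E.IsHeisenberg) (u v : L) :
    ⁅u, v⁆ = (E.repr u 0 * E.repr v 1 - E.repr v 0 * E.repr u 1) • E 2 := by
  conv_lhs => rw [← E.repr_smul_add_fin_three u, ← E.repr_smul_add_fin_three v]
  exact hE.lie_coords ..

theorem lie_lie_eq_zero (hE : E.IsHeisenberg) (u v w : L) : ⁅⁅u, v⁆, w⁆ = 0 := by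
  rw [hE.lie_eq ⁅u, v⁆ w, hE.lie_eq u v]
  simp

theorem eq_repr_two_smul_of_forall_lie_eq_zero (hE : E.IsHeisenberg) {x : L}
    (hx : ∀ u : L, ⁅u, x⁆ = 0) : x = E.repr x 2 • E 2 := by
  have coord_two : ∀ c : R, c • E 2 = 0 → c = 0 := fun c hc => by
    simpa using congrArg (E.repr · 2) hc
  have h0 : E.repr x 1 = 0 := coord_two _ (by simpa [hE.lie_eq] using hx (E 0))
  have h1 : E.repr x 0 = 0 := coord_two _ (by simpa [hE.lie_eq] using hx (E 1))
  conv_lhs => rw [← E.repr_smul_add_fin_three x, h0, h1]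
  simp

end Module.Basis.IsHeisenberg

namespace IsTwoMap

variable {E : Module.Basis (Fin 3) R L} {ω : L → L}

theorem apply_eq_repr_two_smul (hω : IsTwoMap R ω) (hE : E.IsHeisenberg)
    (v : L) : ω v = E.repr (ω v) 2 • E 2 :=
  hE.eq_repr_two_smul_of_forall_lie_eq_zero fun u => by rw [hω.2.1, hE.lie_lie_eq_zero]

theorem apply_coords (hω : IsTwoMap R ω) (hE : E.IsHeisenberg)
    (α β γ : R) :
    ω (α • E 0 + β • E 1 + γ • E 2) =
      (α ^ 2 * E.repr (ω (E 0)) 2 + β ^ 2 * E.repr (ω (E 1)) 2 + γ ^ 2 * E.repr (ω (E 2)) 2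
        + α * β) • E 2 := by
  have hscaled : ∀ (c : R) i, ω (c • E i) = (c ^ 2 * E.repr (ω (E i)) 2) • E 2 := fun c i => by
    rw [hω.1]
    conv_lhs => rw [hω.apply_eq_repr_two_smul hE (E i)]
    rw [smul_smul]
  have hlie01 : ⁅α • E 0, β • E 1⁆ = (α * β) • E 2 := by
    rw [smul_lie, lie_smul, hE.lie_zero_one, smul_smul]
  have hlie2 : ⁅α • E 0 + β • E 1, γ • E 2⁆ = 0 := by
    simp only [add_lie, smul_lie, lie_smul, hE.lie_zero_two, hE.lie_one_two, smul_zero, add_zero]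
  rw [hω.2.2, hω.2.2, hscaled, hscaled, hscaled, hlie01, hlie2, add_zero]
  module

theorem of_apply_coords [CharP R 2] (hE : E.IsHeisenberg) {a b c : R}
    (hω : ∀ α β γ : R, ω (α • E 0 + β • E 1 + γ • E 2) =
      (α ^ 2 * a + β ^ 2 * b + γ ^ 2 * c + α * β) • E 2) :
    IsTwoMap R ω := by
  have hω' : ∀ u, ω u = (E.repr u 0 ^ 2 * a + E.repr u 1 ^ 2 * b + E.repr u 2 ^ 2 * c
      + E.repr u 0 * E.repr u 1) • E 2 := fun u => by
    conv_lhs => rw [← E.repr_smul_add_fin_three u]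
    exact hω ..
  refine ⟨fun s u => ?_, fun u v => ?_, fun u v => ?_⟩
  · simp only [hω', map_smul, Finsupp.smul_apply, smul_eq_mul, smul_smul]
    congr 1
    ring
  · rw [hE.lie_lie_eq_zero, hω', lie_smul, hE.lie_eq u (E 2)]
    simp
  · simp only [hω', hE.lie_eq u v, map_add, Finsupp.add_apply, ← add_smul]
    congr 1
    linear_combination (E.repr u 0 * E.repr v 0 * a + E.repr u 1 * E.repr v 1 * b
      + E.repr u 2 * E.repr v 2 * c + E.repr v 0 * E.repr u 1) * CharTwo.two_eq_zero (R := R)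

end IsTwoMap

end

/-- Over a field of characteristic 2, the 2-maps on the Heisenberg algebra are exactly
the maps `α•E0 + β•E1 + γ•E2 ↦ (α²a + β²b + γ²c + αβ) • E2` for scalars `a, b, c`. -/
theorem statement17 (F : Type*) [Field F] [CharP F 2]
    (h : Type*) [LieRing h] [LieAlgebra F h]
    (E : Module.Basis (Fin 3) F h)
    (hE01 : ⁅E 0, E 1⁆ = E 2) (hE02 : ⁅E 0, E 2⁆ = 0) (hE12 : ⁅E 1, E 2⁆ = 0)
    (ω : h → h) :
    ((∀ (c : F) (u : h), ω (c • u) = c ^ 2 • ω u) ∧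
     (∀ u v : h, ⁅u, ω v⁆ = ⁅⁅u, v⁆, v⁆) ∧
     (∀ u v : h, ω (u + v) = ω u + ω v + ⁅u, v⁆)) ↔
    ∃ a b c : F, ∀ α β γ : F,
      ω (α • E 0 + β • E 1 + γ • E 2) = (α ^ 2 * a + β ^ 2 * b + γ ^ 2 * c + α * β) • E 2 := by
  have hE : E.IsHeisenberg := ⟨hE01, hE02, hE12⟩
  constructor
  · intro hω
    exact ⟨_, _, _, IsTwoMap.apply_coords hω hE⟩
  · rintro ⟨a, b, c, hω⟩
    exact IsTwoMap.of_apply_coords hE hω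
end
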